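/- arXiv:2308.03187 — 4 statements merged into one kernel-verified Lean document; each statement's English description precedes it below -/
import Mathlib

section
/- The number of ⊗-irreducible partition diagrams of order 1 is 2, and the number of ⊗-irreducible partition diagrams of order 2 is 11. -/
open Finset

/-- A partition diagram of order `k`: a set partition (equivalence relation) on the
`2k`-element set `Fin k × Bool`, where `(i, true)` denotes the top node `i+1` and
`(i, false)` denotes the bottom node `(i+1)'`. -/
abbrev DiagramOn (k : ℕ) := Setoid (Fin k × Bool)

/-- A partition diagram of arbitrary order. -/
abbrev Diagram := Σ k : ℕ, DiagramOn k

/-- The disjoint sum of two set partitions. -/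
def sumSetoid {α β : Type*} (s : Setoid α) (t : Setoid β) : Setoid (α ⊕ β) where
  r x y :=
    match x, y with
    | .inl a, .inl b => s.r a b
    | .inr a, .inr b => t.r a b
    | _, _ => False
  iseqv := by
    refine ⟨?_, ?_, ?_⟩
    · rintro (a | a)
      · exact s.iseqv.refl a
      · exact t.iseqv.refl a
    · rintro (a | a) (b | b) h
      · exact s.iseqv.symm h
      · exact h.elim
      · exact h.elim
      · exact t.iseqv.symm h
    · rintro (a | a) (b | b) (c | c) h₁ h₂ <;>
        first
          | exact s.iseqv.trans h₁ h₂
          | exact t.iseqv.trans h₁ h₂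
          | exact h₁.elim
          | exact h₂.elim

/-- The relabeling identifying the nodes of two concatenated diagrams of orders `j`, `m`
with the nodes of a diagram of order `j + m`. -/
def concatEquiv (j m : ℕ) : (Fin j × Bool) ⊕ (Fin m × Bool) ≃ Fin (j + m) × Bool :=
  (Equiv.sumProdDistrib (Fin j) (Fin m) Bool).symm.trans
    (Equiv.prodCongr finSumFinEquiv (Equiv.refl Bool))

/-- Horizontal concatenation of partition diagrams. -/
def concatOn {j m : ℕ} (s : DiagramOn j) (t : DiagramOn m) : DiagramOn (j + m) :=
  Setoid.comap (concatEquiv j m).symm (sumSetoid s t)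

/-- Horizontal concatenation `⊗` of diagrams of arbitrary orders. -/
def Diagram.concat (d₁ d₂ : Diagram) : Diagram :=
  ⟨d₁.1 + d₂.1, concatOn d₁.2 d₂.2⟩

/-- A nonempty diagram is `⊗`-irreducible if it is not the concatenation of two
nonempty diagrams. -/
def Diagram.Irr (d : Diagram) : Prop :=
  d.1 ≠ 0 ∧ ¬ ∃ d₁ d₂ : Diagram, d₁.1 ≠ 0 ∧ d₂.1 ≠ 0 ∧ d = d₁.concat d₂

/-- The Bell number: the number of set partitions of an `m`-element set. -/
noncomputable def bell (m : ℕ) : ℕ := Nat.card (Setoid (Fin m))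

/-- The smallest equivalence relation containing `s` and relating `a` with `b`
(merging the blocks of `a` and `b`). -/
def joinTwo {X : Type*} (s : Setoid X) (a b : X) : Setoid X :=
  s ⊔ Relation.EqvGen.setoid (fun x y => x = a ∧ y = b)

/-- The near-concatenation `•` of partition diagrams: concatenate, then merge the block
of the bottom-right node of the first diagram with the block of the bottom-left node of
the second diagram.  By convention `∅ • ρ = ρ` and `π • ∅ = π`. -/
def Diagram.bullet (d₁ d₂ : Diagram) : Diagram :=
  if h₁ : d₁.1 = 0 then d₂
  else if h₂ : d₂.1 = 0 then d₁
  else ⟨d₁.1 + d₂.1,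
    joinTwo (concatOn d₁.2 d₂.2)
      (⟨d₁.1 - 1, by omega⟩, false) (⟨d₁.1, by omega⟩, false)⟩

/-- The `⊗`-product of a list of diagrams (empty diagram for the empty list). -/
def Diagram.listConcat : List Diagram → Diagram
  | [] => ⟨0, ⊥⟩
  | d :: l => l.foldl Diagram.concat d

/-- The `•`-product of a list of diagrams (empty diagram for the empty list). -/
def Diagram.listBullet : List Diagram → Diagram
  | [] => ⟨0, ⊥⟩
  | d :: l => l.foldl Diagram.bullet d

/-- The number of `⊗`-irreducible partition diagrams of order `k`. -/
noncomputable def irrCount (k : ℕ) : ℕ := Nat.card {s : DiagramOn k // Diagram.Irr ⟨k, s⟩}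

/-!
Every diagram of order 1 is irreducible, so there are as many as set partitions of a
2-element set, namely 2. A diagram of order 2 is reducible exactly when it is the
concatenation of two diagrams of order 1, and concatenation is injective, so 2 · 2 = 4 of
the 15 set partitions of a 4-element set are reducible, leaving 11. The Bell numbers 2 and 15
are computed by encoding a set partition of a finite linear order by the map sending each
element to the least element of its block; there are only 4⁴ maps to check.
-/

open Function

def Equiv.setoidCongr {α β : Type*} (e : α ≃ β) : Setoid α ≃ Setoid β where
  toFun s := s.comap e.symm
  invFun s := s.comap e
  left_inv s := Setoid.ext fun x y => by simp [Setoid.comap_rel]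
  right_inv s := Setoid.ext fun x y => by simp [Setoid.comap_rel]

namespace Setoid

instance {α : Type*} [Finite α] : Finite (Setoid α) :=
  Finite.of_injective (fun s : Setoid α => (s : α → α → Prop))
    fun _ _ h => Setoid.ext fun a b => Iff.of_eq (congrFun₂ h a b)

lemma card_eq_bell (α : Type*) [Finite α] : Nat.card (Setoid α) = bell (Nat.card α) :=
  Nat.card_congr (Finite.equivFin α).setoidCongr

section LeastRepr

variable {α : Type*} [Fintype α] [LinearOrder α] (s : Setoid α)

open scoped Classical in
noncomputable def leastRepr (x : α) : α :=
  (univ.filter (s · x)).min' ⟨x, mem_filter.2 ⟨mem_univ x, s.refl' x⟩⟩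

lemma leastRepr_rel (x : α) : s (s.leastRepr x) x := by
  classical
  exact (mem_filter.1 (min'_mem (univ.filter (s · x)) _)).2

lemma leastRepr_le_of_rel {x y : α} (h : s y x) : s.leastRepr x ≤ y := by
  classical
  exact min'_le (univ.filter (s · x)) _ (mem_filter.2 ⟨mem_univ y, h⟩)

lemma leastRepr_le (x : α) : s.leastRepr x ≤ x :=
  s.leastRepr_le_of_rel (s.refl' x)

lemma leastRepr_eq_of_rel {x y : α} (h : s x y) : s.leastRepr x = s.leastRepr y :=
  le_antisymm (s.leastRepr_le_of_rel (s.trans' (s.leastRepr_rel y) (s.symm' h)))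
    (s.leastRepr_le_of_rel (s.trans' (s.leastRepr_rel x) h))

lemma leastRepr_eq_iff_rel (x y : α) : s.leastRepr x = s.leastRepr y ↔ s x y :=
  ⟨fun h => s.trans' (s.symm' (s.leastRepr_rel x)) (h ▸ s.leastRepr_rel y),
    s.leastRepr_eq_of_rel⟩

lemma leastRepr_ker {f : α → α} (hf : ∀ x, f (f x) = f x ∧ f x ≤ x) (x : α) :
    (ker f).leastRepr x = f x := by
  refine le_antisymm ((ker f).leastRepr_le_of_rel (hf x).1) ?_
  calc f x = f ((ker f).leastRepr x) := ((ker f).leastRepr_rel x).symm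
    _ ≤ (ker f).leastRepr x := (hf _).2

variable (α) in
noncomputable def equivLeastRepr :
    Setoid α ≃ {f : α → α // ∀ x, f (f x) = f x ∧ f x ≤ x} where
  toFun s :=
    ⟨s.leastRepr, fun x => ⟨s.leastRepr_eq_of_rel (s.leastRepr_rel x), s.leastRepr_le x⟩⟩
  invFun f := ker f.1
  left_inv s := Setoid.ext s.leastRepr_eq_iff_rel
  right_inv f := Subtype.ext <| funext <| leastRepr_ker f.2

end LeastRepr

end Setoid

lemma bell_eq_card_leastRepr (n : ℕ) :
    bell n = Fintype.card {f : Fin n → Fin n // ∀ x, f (f x) = f x ∧ f x ≤ x} := by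
  rw [bell, Nat.card_congr (Setoid.equivLeastRepr (Fin n)), Nat.card_eq_fintype_card]

lemma bell_two : bell 2 = 2 := by
  rw [bell_eq_card_leastRepr]
  decide

lemma bell_four : bell 4 = 15 := by
  rw [bell_eq_card_leastRepr]
  decide

lemma card_diagramOn (k : ℕ) : Nat.card (DiagramOn k) = bell (2 * k) := by
  rw [Setoid.card_eq_bell, Nat.card_prod, Nat.card_eq_fintype_card (α := Bool), Nat.card_fin,
    Fintype.card_bool, mul_comm]

lemma sumSetoid_injective (α β : Type*) :
    Injective (uncurry (sumSetoid : Setoid α → Setoid β → Setoid (α ⊕ β))) := by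
  rintro ⟨s, t⟩ ⟨s', t'⟩ h
  exact Prod.ext (Setoid.ext fun a b => Setoid.ext_iff.1 h (.inl a) (.inl b))
    (Setoid.ext fun a b => Setoid.ext_iff.1 h (.inr a) (.inr b))

lemma concatOn_injective (j m : ℕ) :
    Injective (uncurry concatOn : DiagramOn j × DiagramOn m → DiagramOn (j + m)) :=
  (Setoid.comap_injective _ (concatEquiv j m).symm.surjective).comp (sumSetoid_injective _ _)

lemma Diagram.irr_of_fst_eq_one {d : Diagram} (hd : d.1 = 1) : d.Irr := by
  refine ⟨by omega, ?_⟩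
  rintro ⟨d₁, d₂, h₁, h₂, rfl⟩
  have : d₁.1 + d₂.1 = 1 := hd
  omega

lemma Diagram.irr_two_iff (s : DiagramOn 2) :
    Diagram.Irr ⟨2, s⟩ ↔
      s ∉ Set.range (uncurry concatOn : DiagramOn 1 × DiagramOn 1 → DiagramOn 2) := by
  simp only [Diagram.Irr, ne_eq, OfNat.ofNat_ne_zero, not_false_eq_true, true_and,
    Set.mem_range, Prod.exists, uncurry_apply_pair]
  refine not_congr
    ⟨?_, fun ⟨t, u, hs⟩ => ⟨⟨1, t⟩, ⟨1, u⟩, one_ne_zero, one_ne_zero, hs ▸ rfl⟩⟩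
  rintro ⟨⟨j, t⟩, ⟨m, u⟩, hj : j ≠ 0, hm : m ≠ 0, heq⟩
  obtain ⟨rfl, rfl⟩ : j = 1 ∧ m = 1 := by
    have : 2 = j + m := congrArg Sigma.fst heq
    omega
  exact ⟨t, u, (eq_of_heq (Sigma.mk.inj_iff.1 heq).2).symm⟩

/-- There are `2` irreducible diagrams of order `1` and `11` of order `2`. -/
theorem irrCount_one_two : irrCount 1 = 2 ∧ irrCount 2 = 11 := by
  constructor
  · rw [irrCount, Nat.card_congr (Equiv.subtypeUnivEquiv fun _ => Diagram.irr_of_fst_eq_one rfl),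
      card_diagramOn, bell_two]
  · set reducible := Set.range (uncurry concatOn : DiagramOn 1 × DiagramOn 1 → DiagramOn 2)
    have card_reducible : reducible.ncard = 4 := by
      rw [Set.ncard_range_of_injective (concatOn_injective 1 1), Nat.card_prod, card_diagramOn,
        bell_two]
    calc irrCount 2 = reducibleᶜ.ncard :=
          Nat.card_congr (Equiv.subtypeEquivRight Diagram.irr_two_iff)
      _ = 11 := by rw [Set.ncard_compl, card_diagramOn, bell_four, card_reducible]
end

section
/- For partition diagrams ρ and π, the diagram ρ • π is ⊗-irreducible if and only if both ρ and π are ⊗-irreducible. -/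
open Finset

/-!
A diagram of order `k` splits as a concatenation at position `c` exactly when it refines the
two-block partition `cutSetoid k c` separating the nodes left of `c` from the others, so
irreducibility says that no cut `0 < c < k` is refined. For `ρ • π` with `ρ` of order `j`, the
extra merge of the nodes `j'` and `(j+1)'` destroys the cut at `j` and affects no other cut; a cut
left (right) of `j` is refined by `ρ ⊗ π` iff it is refined by `ρ` (by `π`).
-/

lemma Setoid.joinTwo_le_iff {X : Type*} {s r : Setoid X} {a b : X} :
    joinTwo s a b ≤ r ↔ s ≤ r ∧ r a b := by
  refine sup_le_iff.trans (and_congr_right fun _ => ⟨fun h => h ?_, fun h => ?_⟩)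
  · exact Relation.EqvGen.rel a b ⟨rfl, rfl⟩
  · exact Setoid.eqvGen_le fun x y ⟨hx, hy⟩ => hx ▸ hy ▸ h

section Concat

variable {j m : ℕ}

lemma concatEquiv_inl (x : Fin j × Bool) :
    concatEquiv j m (.inl x) = (Fin.castAdd m x.1, x.2) := by
  simp [concatEquiv]

lemma concatEquiv_inr (x : Fin m × Bool) :
    concatEquiv j m (.inr x) = (Fin.natAdd j x.1, x.2) := by
  simp [concatEquiv]

lemma concatOn_concatEquiv (s : DiagramOn j) (t : DiagramOn m) (x y) :
    concatOn s t (concatEquiv j m x) (concatEquiv j m y) ↔ sumSetoid s t x y := by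
  rw [concatOn, Setoid.comap_rel, Equiv.symm_apply_apply, Equiv.symm_apply_apply]

lemma concatOn_le_iff {s : DiagramOn j} {t : DiagramOn m} {r : DiagramOn (j + m)} :
    concatOn s t ≤ r ↔
      s ≤ r.comap (concatEquiv j m ∘ .inl) ∧ t ≤ r.comap (concatEquiv j m ∘ .inr) := by
  refine ⟨fun h => ⟨fun x y hxy => h ?_, fun x y hxy => h ?_⟩, fun ⟨hs, ht⟩ x y hxy => ?_⟩
  · exact (concatOn_concatEquiv s t (.inl x) (.inl y)).mpr hxy
  · exact (concatOn_concatEquiv s t (.inr x) (.inr y)).mpr hxy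
  · obtain ⟨x, rfl⟩ := (concatEquiv j m).surjective x
    obtain ⟨y, rfl⟩ := (concatEquiv j m).surjective y
    rw [concatOn_concatEquiv] at hxy
    rcases x with x | x <;> rcases y with y | y
    exacts [hs hxy, hxy.elim, hxy.elim, ht hxy]

def cutSetoid (k c : ℕ) : DiagramOn k := Setoid.ker fun x => x.1.1 < c

lemma cutSetoid_apply {k c : ℕ} (x y : Fin k × Bool) :
    cutSetoid k c x y ↔ (x.1.1 < c ↔ y.1.1 < c) := by
  rw [cutSetoid, Setoid.ker_def, eq_iff_iff]

lemma cutSetoid_self (k : ℕ) : cutSetoid k k = ⊤ :=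
  Setoid.ext fun x y => by simp [cutSetoid_apply]

variable {s : DiagramOn j} {t : DiagramOn m}

lemma concatOn_le_cutSetoid_of_le {c : ℕ} (hc : c ≤ j) :
    concatOn s t ≤ cutSetoid (j + m) c ↔ s ≤ cutSetoid j c := by
  have hl : (cutSetoid (j + m) c).comap (concatEquiv j m ∘ .inl) = cutSetoid j c := by
    ext x y; simp [Setoid.comap_rel, cutSetoid_apply, concatEquiv_inl]
  have hr : (cutSetoid (j + m) c).comap (concatEquiv j m ∘ .inr) = ⊤ := by
    ext x y; simp [Setoid.comap_rel, cutSetoid_apply, concatEquiv_inr]; omega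
  simp [concatOn_le_iff, hl, hr]

lemma concatOn_le_cutSetoid_of_ge {c : ℕ} (hc : j ≤ c) :
    concatOn s t ≤ cutSetoid (j + m) c ↔ t ≤ cutSetoid m (c - j) := by
  have hl : (cutSetoid (j + m) c).comap (concatEquiv j m ∘ .inl) = ⊤ := by
    ext x y; simp [Setoid.comap_rel, cutSetoid_apply, concatEquiv_inl]; omega
  have hr : (cutSetoid (j + m) c).comap (concatEquiv j m ∘ .inr) = cutSetoid m (c - j) := by
    ext x y; simp [Setoid.comap_rel, cutSetoid_apply, concatEquiv_inr]; omega
  simp [concatOn_le_iff, hl, hr]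

lemma le_cutSetoid_iff_exists_concatOn {r : DiagramOn (j + m)} :
    r ≤ cutSetoid (j + m) j ↔ ∃ (s : DiagramOn j) (t : DiagramOn m), r = concatOn s t := by
  refine ⟨fun h => ⟨r.comap (concatEquiv j m ∘ .inl), r.comap (concatEquiv j m ∘ .inr),
    Setoid.ext fun x y => ?_⟩, ?_⟩
  · obtain ⟨x, rfl⟩ := (concatEquiv j m).surjective x
    obtain ⟨y, rfl⟩ := (concatEquiv j m).surjective y
    rw [concatOn_concatEquiv]
    have hcross (a : Fin j × Bool) (b : Fin m × Bool) :
        ¬ r (concatEquiv j m (.inl a)) (concatEquiv j m (.inr b)) := fun hab => by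
      simpa [cutSetoid_apply, concatEquiv_inl, concatEquiv_inr] using h hab
    rcases x with x | x <;> rcases y with y | y
    · rfl
    · exact iff_of_false (hcross x y) id
    · exact iff_of_false (fun hyx => hcross y x (r.symm hyx)) id
    · rfl
  · rintro ⟨s, t, rfl⟩
    simp [concatOn_le_cutSetoid_of_le le_rfl, cutSetoid_self]

lemma concatOn_not_le_cutSetoid_iff :
    (∀ c, 0 < c → c < j + m → c ≠ j → ¬ concatOn s t ≤ cutSetoid (j + m) c) ↔
      (∀ c, 0 < c → c < j → ¬ s ≤ cutSetoid j c) ∧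
        (∀ c, 0 < c → c < m → ¬ t ≤ cutSetoid m c) := by
  refine ⟨fun h => ⟨fun c hc0 hcj => ?_, fun c hc0 hcm => ?_⟩, fun ⟨hs, ht⟩ c hc0 hc hcj => ?_⟩
  · rw [← concatOn_le_cutSetoid_of_le hcj.le]
    exact h c hc0 (by omega) hcj.ne
  · have := h (j + c) (by omega) (by omega) (by omega)
    rwa [concatOn_le_cutSetoid_of_ge (by omega), Nat.add_sub_cancel_left] at this
  · rcases lt_or_gt_of_ne hcj with hcj | hcj
    · rw [concatOn_le_cutSetoid_of_le hcj.le]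
      exact hs c hc0 hcj
    · rw [concatOn_le_cutSetoid_of_ge hcj.le]
      exact ht (c - j) (by omega) (by omega)

end Concat

lemma Diagram.irr_mk_iff {k : ℕ} (s : DiagramOn k) (hk : k ≠ 0) :
    Diagram.Irr ⟨k, s⟩ ↔ ∀ c, 0 < c → c < k → ¬ s ≤ cutSetoid k c := by
  refine ⟨fun ⟨_, h⟩ c hc0 hck hle => ?_, fun h => ⟨hk, ?_⟩⟩
  · obtain ⟨m, rfl⟩ : ∃ m, k = c + m := ⟨k - c, by omega⟩
    obtain ⟨s₁, s₂, rfl⟩ := le_cutSetoid_iff_exists_concatOn.mp hle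
    exact h ⟨⟨c, s₁⟩, ⟨m, s₂⟩, hc0.ne', by dsimp only; omega, rfl⟩
  · rintro ⟨⟨j, s₁⟩, ⟨m, s₂⟩, hj, hm, heq⟩
    dsimp only at hj hm
    cases heq
    exact h j (by omega) (by dsimp only; omega)
      (le_cutSetoid_iff_exists_concatOn.mpr ⟨s₁, s₂, rfl⟩)

lemma Diagram.bullet_mk {j m : ℕ} (s : DiagramOn j) (t : DiagramOn m) (hj : j ≠ 0) (hm : m ≠ 0) :
    Diagram.bullet ⟨j, s⟩ ⟨m, t⟩ =
      ⟨j + m, joinTwo (concatOn s t) (⟨j - 1, by omega⟩, false) (⟨j, by omega⟩, false)⟩ := by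
  rw [Diagram.bullet, dif_neg hj, dif_neg hm]

/-- For (nonempty) partition diagrams `ρ` and `π`, `ρ • π` is
`⊗`-irreducible if and only if both `ρ` and `π` are `⊗`-irreducible. -/
theorem bullet_irreducible_iff (ρ π : Diagram) (hρ : ρ.1 ≠ 0) (hπ : π.1 ≠ 0) :
    (ρ.bullet π).Irr ↔ ρ.Irr ∧ π.Irr := by
  obtain ⟨j, s⟩ := ρ
  obtain ⟨m, t⟩ := π
  dsimp only at hρ hπ
  rw [Diagram.bullet_mk s t hρ hπ, Diagram.irr_mk_iff _ (by omega), Diagram.irr_mk_iff s hρ,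
    Diagram.irr_mk_iff t hπ, ← concatOn_not_le_cutSetoid_iff]
  refine forall₃_congr fun c _ _ => ?_
  have hmerge : (j - 1 < c ↔ j < c) ↔ c ≠ j := by omega
  simp only [Setoid.joinTwo_le_iff, cutSetoid_apply, hmerge]
  tauto
end

section
/- Every nonempty partition diagram π admits a unique decomposition π = θ⁽¹⁾ • θ⁽²⁾ • ··· • θ⁽ᵐ⁾ into nonempty •-irreducible partition diagrams. -/
open Finset

/-- A nonempty diagram is `•`-irreducible if it is not a `•`-product of two nonempty
diagrams. -/
def Diagram.BulletIrr (d : Diagram) : Prop :=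
  d.1 ≠ 0 ∧ ¬ ∃ d₁ d₂ : Diagram, d₁.1 ≠ 0 ∧ d₂.1 ≠ 0 ∧ d = d₁.bullet d₂

/-!
A factorization `π = σ • θ` with `σ`, `θ` nonempty is visible in `π` itself: the bottom nodes
`|σ|'` and `(|σ|+1)'` lie in one block, and that block is the only one meeting both sides of the
cut after column `|σ|`. Conversely, every such cut exhibits `π` as the `•`-product of its
restrictions to the two sides, so the factors are determined by the position of the cut. The cuts
of `θ` are exactly the cuts of `σ • θ` to the right of `|σ|`; hence in a factorization into
irreducibles the last factor is cut off at the last cut of `π`, and existence and uniqueness both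
follow by peeling off that last factor.
-/

theorem joinTwo_apply {X : Type*} (s : Setoid X) (a b x y : X) :
    joinTwo s a b x y ↔ s x y ∨ (s x a ∧ s b y) ∨ (s x b ∧ s a y) := by
  let t : Setoid X :=
    { r := fun x y => s x y ∨ (s x a ∧ s b y) ∨ (s x b ∧ s a y)
      iseqv :=
        { refl := fun x => Or.inl (s.refl x)
          symm := by
            rintro x y (h | ⟨h₁, h₂⟩ | ⟨h₁, h₂⟩)
            exacts [Or.inl (s.symm h), Or.inr (Or.inr ⟨s.symm h₂, s.symm h₁⟩),
              Or.inr (Or.inl ⟨s.symm h₂, s.symm h₁⟩)]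
          trans := by
            have htrans : ∀ {x y z}, s x y → s y z → s x z := s.trans
            have hsymm : ∀ {x y}, s x y → s y x := s.symm
            rintro x y z (h | h | h) (g | g | g) <;> grind } }
  set u := joinTwo s a b
  constructor
  · have hut : u ≤ t := sup_le (fun x y h => Or.inl h) <| Setoid.eqvGen_le <| by
      rintro x y ⟨rfl, rfl⟩
      exact Or.inr (Or.inl ⟨s.refl _, s.refl _⟩)
    exact fun h => hut h
  · have hs : s ≤ u := le_sup_left
    have hab : u a b := (le_sup_right : _ ≤ u) (Relation.EqvGen.rel a b ⟨rfl, rfl⟩)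
    rintro (h | ⟨h₁, h₂⟩ | ⟨h₁, h₂⟩)
    · exact hs h
    · exact u.trans (hs h₁) (u.trans hab (hs h₂))
    · exact u.trans (hs h₁) (u.trans (u.symm hab) (hs h₂))

section sumSetoid

variable {α β : Type*} (s : Setoid α) (t : Setoid β)

@[simp] theorem sumSetoid_inl_inl (a b : α) : sumSetoid s t (.inl a) (.inl b) ↔ s a b := Iff.rfl
@[simp] theorem sumSetoid_inr_inr (a b : β) : sumSetoid s t (.inr a) (.inr b) ↔ t a b := Iff.rfl
@[simp] theorem sumSetoid_inl_inr (a : α) (b : β) : ¬ sumSetoid s t (.inl a) (.inr b) := id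
@[simp] theorem sumSetoid_inr_inl (a : β) (b : α) : ¬ sumSetoid s t (.inr a) (.inl b) := id

end sumSetoid

theorem concatOn_apply {j m : ℕ} (s : DiagramOn j) (t : DiagramOn m) (a b : Fin (j + m) × Bool) :
    concatOn s t a b ↔ sumSetoid s t ((concatEquiv j m).symm a) ((concatEquiv j m).symm b) :=
  Iff.rfl

theorem concatEquiv_symm_apply_of_lt {j m i : ℕ} (b : Bool) (hi : i < j) (h : i < j + m) :
    (concatEquiv j m).symm (⟨i, h⟩, b) = .inl (⟨i, hi⟩, b) := by
  rw [Equiv.symm_apply_eq]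
  simp [concatEquiv]

theorem concatEquiv_symm_apply_of_le {j m i : ℕ} (b : Bool) (hi : j ≤ i) (h : i < j + m) :
    (concatEquiv j m).symm (⟨i, h⟩, b) = .inr (⟨i - j, by omega⟩, b) := by
  rw [Equiv.symm_apply_eq]
  simp only [concatEquiv, Equiv.trans_apply, Equiv.sumProdDistrib_symm_apply_right,
    Equiv.prodCongr_apply, Equiv.coe_refl, Prod.map_apply, finSumFinEquiv_apply_right,
    Fin.natAdd_mk, id_eq, Prod.mk.injEq, Fin.mk.injEq, and_true]
  omega

theorem exists_eq_add_fst {α : Type*} {j : ℕ} {y : ℕ × α} (h : j ≤ y.1) :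
    ∃ y' : ℕ × α, y = (y'.1 + j, y'.2) :=
  ⟨(y.1 - j, y.2), by simp [Nat.sub_add_cancel h]⟩

namespace Diagram

/-- The partition of `d` read on all of `ℕ × Bool`, so that diagrams of different orders can be
compared without casts; nodes outside `d` are related to nothing. -/
def Rel (d : Diagram) (x y : ℕ × Bool) : Prop :=
  ∃ (hx : x.1 < d.1) (hy : y.1 < d.1), d.2 (⟨x.1, hx⟩, x.2) (⟨y.1, hy⟩, y.2)

variable {d σ θ π : Diagram} {x y : ℕ × Bool} {c j : ℕ}

theorem Rel.lt_left (h : d.Rel x y) : x.1 < d.1 := h.1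

theorem Rel.lt_right (h : d.Rel x y) : y.1 < d.1 := h.2.1

theorem Rel.symm (h : d.Rel x y) : d.Rel y x := ⟨h.2.1, h.1, d.2.symm h.2.2⟩

theorem rel_comm : d.Rel x y ↔ d.Rel y x := ⟨Rel.symm, Rel.symm⟩

theorem not_rel_of_le_left (h : d.1 ≤ x.1) : ¬ d.Rel x y := fun h' => (h'.1.trans_le h).false

theorem not_rel_of_le_right (h : d.1 ≤ y.1) : ¬ d.Rel x y := fun h' => (h'.2.1.trans_le h).false

theorem ext_rel {d₁ d₂ : Diagram} (h : ∀ x y, d₁.Rel x y ↔ d₂.Rel x y) : d₁ = d₂ := by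
  obtain ⟨k₁, s₁⟩ := d₁
  obtain ⟨k₂, s₂⟩ := d₂
  obtain rfl : k₁ = k₂ := eq_of_forall_lt_iff fun i => by simpa [Rel] using h (i, true) (i, true)
  congr 1
  ext a b
  simpa [Rel] using h (a.1, a.2) (b.1, b.2)

theorem ext_rel_of_fst_le {d₁ d₂ : Diagram}
    (h : ∀ x y : ℕ × Bool, x.1 ≤ y.1 → (d₁.Rel x y ↔ d₂.Rel x y)) : d₁ = d₂ :=
  ext_rel fun x y => (le_total x.1 y.1).elim (h x y) fun hyx =>
    rel_comm.trans ((h y x hyx).trans rel_comm)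

theorem eq_of_fst_eq_zero {d₁ d₂ : Diagram} (h₁ : d₁.1 = 0) (h₂ : d₂.1 = 0) : d₁ = d₂ :=
  ext_rel fun x y => by simp [not_rel_of_le_left, h₁, h₂]

theorem rel_concat : (σ.concat θ).Rel x y ↔
    σ.Rel x y ∨ σ.1 ≤ x.1 ∧ σ.1 ≤ y.1 ∧ θ.Rel (x.1 - σ.1, x.2) (y.1 - σ.1, y.2) := by
  obtain ⟨i, b⟩ := x
  obtain ⟨i', b'⟩ := y
  change (∃ (hx : i < σ.1 + θ.1) (hy : i' < σ.1 + θ.1),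
    concatOn σ.2 θ.2 (⟨i, hx⟩, b) (⟨i', hy⟩, b')) ↔ _
  rcases lt_or_ge i σ.1 with hi | hi <;> rcases lt_or_ge i' σ.1 with hi' | hi'
  · simp only [concatOn_apply, concatEquiv_symm_apply_of_lt _ hi,
      concatEquiv_symm_apply_of_lt _ hi', sumSetoid_inl_inl, Rel]
    constructor
    · rintro ⟨_, _, h⟩
      exact Or.inl ⟨hi, hi', h⟩
    · rintro (⟨_, _, h⟩ | ⟨h, -⟩)
      · exact ⟨by omega, by omega, h⟩
      · omega
  · simp [concatOn_apply, concatEquiv_symm_apply_of_lt _ hi, concatEquiv_symm_apply_of_le _ hi',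
      Rel, hi, hi']
  · simp [concatOn_apply, concatEquiv_symm_apply_of_le _ hi, concatEquiv_symm_apply_of_lt _ hi',
      Rel, hi, hi']
  · simp only [concatOn_apply, concatEquiv_symm_apply_of_le _ hi,
      concatEquiv_symm_apply_of_le _ hi', sumSetoid_inr_inr, Rel]
    constructor
    · rintro ⟨_, _, h⟩
      exact Or.inr ⟨hi, hi', by omega, by omega, h⟩
    · rintro (⟨h, -⟩ | ⟨-, -, _, _, h⟩)
      · omega
      · exact ⟨by omega, by omega, h⟩

theorem bullet_fst : (σ.bullet θ).1 = σ.1 + θ.1 := by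
  unfold bullet
  split_ifs <;> simp_all

theorem bullet_eq_right (h : σ.1 = 0) : σ.bullet θ = θ := dif_pos h

theorem bullet_eq_left (h : θ.1 = 0) : σ.bullet θ = σ := by
  rcases eq_or_ne σ.1 0 with hσ | hσ
  · rw [bullet_eq_right hσ, eq_of_fst_eq_zero h hσ]
  · rw [bullet, dif_neg hσ, dif_pos h]

theorem rel_bullet (hσ : σ.1 ≠ 0) (hθ : θ.1 ≠ 0) :
    (σ.bullet θ).Rel x y ↔ (σ.concat θ).Rel x y ∨
      (σ.concat θ).Rel x (σ.1 - 1, false) ∧ (σ.concat θ).Rel (σ.1, false) y ∨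
      (σ.concat θ).Rel x (σ.1, false) ∧ (σ.concat θ).Rel (σ.1 - 1, false) y := by
  have hp : σ.1 - 1 < σ.1 + θ.1 := by omega
  have hq : σ.1 < σ.1 + θ.1 := by omega
  rw [bullet, dif_neg hσ, dif_neg hθ]
  simp only [Rel, joinTwo_apply]
  constructor
  · rintro ⟨hx, hy, h | ⟨h₁, h₂⟩ | ⟨h₁, h₂⟩⟩
    exacts [Or.inl ⟨hx, hy, h⟩, Or.inr (Or.inl ⟨⟨hx, hp, h₁⟩, ⟨hq, hy, h₂⟩⟩),
      Or.inr (Or.inr ⟨⟨hx, hq, h₁⟩, ⟨hp, hy, h₂⟩⟩)]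
  · rintro (⟨hx, hy, h⟩ | ⟨⟨hx, _, h₁⟩, ⟨_, hy, h₂⟩⟩ | ⟨⟨hx, _, h₁⟩, ⟨_, hy, h₂⟩⟩)
    exacts [⟨hx, hy, Or.inl h⟩, ⟨hx, hy, Or.inr (Or.inl ⟨h₁, h₂⟩)⟩,
      ⟨hx, hy, Or.inr (Or.inr ⟨h₁, h₂⟩)⟩]

theorem rel_bullet_of_lt (hx : x.1 < σ.1) (hy : y.1 < σ.1) :
    (σ.bullet θ).Rel x y ↔ σ.Rel x y := by
  rcases eq_or_ne θ.1 0 with hθ | hθ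
  · rw [bullet_eq_left hθ]
  · simp [rel_bullet (by omega : σ.1 ≠ 0) hθ, rel_concat, not_rel_of_le_left,
      not_rel_of_le_right, not_le.2 hx, not_le.2 hy]

theorem rel_bullet_add_add (x y : ℕ × Bool) :
    (σ.bullet θ).Rel (x.1 + σ.1, x.2) (y.1 + σ.1, y.2) ↔ θ.Rel x y := by
  rcases eq_or_ne σ.1 0 with hσ | hσ
  · simp [bullet_eq_right hσ, hσ]
  rcases eq_or_ne θ.1 0 with hθ | hθ
  · simp [bullet_eq_left hθ, not_rel_of_le_left, hθ]
  have : ¬ σ.1 ≤ σ.1 - 1 := by omega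
  simp [rel_bullet hσ hθ, rel_concat, not_rel_of_le_left, not_rel_of_le_right, this]

theorem rel_bullet_of_lt_add (hx : x.1 < σ.1) (y : ℕ × Bool) :
    (σ.bullet θ).Rel x (y.1 + σ.1, y.2) ↔ σ.Rel x (σ.1 - 1, false) ∧ θ.Rel (0, false) y := by
  rcases eq_or_ne θ.1 0 with hθ | hθ
  · simp [bullet_eq_left hθ, not_rel_of_le_right, hθ]
  have : ¬ σ.1 ≤ σ.1 - 1 := by omega
  simp [rel_bullet (by omega : σ.1 ≠ 0) hθ, rel_concat, not_rel_of_le_left, not_rel_of_le_right,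
    this, not_le.2 hx]

def take (π : Diagram) (c : ℕ) : Diagram :=
  ⟨min c π.1, Setoid.comap (fun x => (Fin.castLE (min_le_right c π.1) x.1, x.2)) π.2⟩

def drop (π : Diagram) (c : ℕ) : Diagram :=
  ⟨π.1 - c, Setoid.comap (fun x => (⟨x.1 + c, by omega⟩, x.2)) π.2⟩

@[simp] theorem take_fst : (π.take c).1 = min c π.1 := rfl

@[simp] theorem drop_fst : (π.drop c).1 = π.1 - c := rfl

theorem rel_take : (π.take c).Rel x y ↔ x.1 < c ∧ y.1 < c ∧ π.Rel x y := by
  simp only [Rel, take, lt_min_iff, Setoid.comap_rel]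
  constructor
  · rintro ⟨⟨hx, hx'⟩, ⟨hy, hy'⟩, h⟩
    exact ⟨hx, hy, hx', hy', h⟩
  · rintro ⟨hx, hy, hx', hy', h⟩
    exact ⟨⟨hx, hx'⟩, ⟨hy, hy'⟩, h⟩

theorem rel_drop : (π.drop c).Rel x y ↔ π.Rel (x.1 + c, x.2) (y.1 + c, y.2) := by
  simp only [Rel, drop, Setoid.comap_rel]
  constructor <;> rintro ⟨hx, hy, h⟩ <;> exact ⟨by omega, by omega, h⟩

theorem take_bullet : (σ.bullet θ).take σ.1 = σ :=
  ext_rel fun _ _ => rel_take.trans ⟨fun ⟨hx, hy, h⟩ => (rel_bullet_of_lt hx hy).1 h,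
    fun h => ⟨h.lt_left, h.lt_right, (rel_bullet_of_lt h.lt_left h.lt_right).2 h⟩⟩

theorem drop_bullet : (σ.bullet θ).drop σ.1 = θ :=
  ext_rel fun x y => rel_drop.trans (rel_bullet_add_add x y)

theorem bullet_inj_of_fst_eq {σ₁ σ₂ θ₁ θ₂ : Diagram} (hσ : σ₁.1 = σ₂.1)
    (h : σ₁.bullet θ₁ = σ₂.bullet θ₂) : σ₁ = σ₂ ∧ θ₁ = θ₂ := by
  constructor
  · rw [← take_bullet (σ := σ₁) (θ := θ₁), h, hσ, take_bullet]
  · rw [← drop_bullet (σ := σ₁) (θ := θ₁), h, hσ, drop_bullet]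

/-- Columns are numbered from `0`, so `(c - 1, false)` and `(c, false)` are the bottom nodes `c'`
and `(c+1)'` on either side of the cut. -/
structure SplitsAt (π : Diagram) (c : ℕ) : Prop where
  pos : 0 < c
  lt : c < π.1
  rel_iff : ∀ x y : ℕ × Bool, x.1 < c → c ≤ y.1 →
    (π.Rel x y ↔ π.Rel x (c - 1, false) ∧ π.Rel (c, false) y)

theorem splitsAt_bullet (hσ : σ.1 ≠ 0) (hθ : θ.1 ≠ 0) : (σ.bullet θ).SplitsAt σ.1 := by
  refine ⟨Nat.pos_of_ne_zero hσ, by rw [bullet_fst]; omega, fun x y hx hy => ?_⟩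
  obtain ⟨y, rfl⟩ := exists_eq_add_fst hy
  have hq := rel_bullet_add_add (σ := σ) (θ := θ) (0, false) y
  rw [zero_add] at hq
  rw [rel_bullet_of_lt_add hx, rel_bullet_of_lt hx (by omega), hq]

theorem SplitsAt.eq_bullet_take_drop (h : π.SplitsAt c) : π = (π.take c).bullet (π.drop c) := by
  have ht : (π.take c).1 = c := by simp [h.lt.le]
  refine ext_rel_of_fst_le fun x y hxy => ?_
  rcases lt_or_ge y.1 c with hy | hy
  · rw [rel_bullet_of_lt (by omega) (by omega), rel_take]
    exact ⟨fun h => ⟨by omega, hy, h⟩, fun h => h.2.2⟩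
  obtain ⟨y, rfl⟩ := exists_eq_add_fst (ht.symm ▸ hy)
  rcases lt_or_ge x.1 c with hx | hx
  · rw [rel_bullet_of_lt_add (by omega), rel_take, rel_drop, h.rel_iff x _ hx (by omega)]
    simp [min_eq_left h.lt.le, hx, h.pos]
  · obtain ⟨x, rfl⟩ := exists_eq_add_fst (ht.symm ▸ hx)
    rw [rel_bullet_add_add, rel_drop, ht]

theorem SplitsAt.splitsAt_add_iff (h : π.SplitsAt j) (hc : 0 < c) :
    π.SplitsAt (j + c) ↔ (π.drop j).SplitsAt c := by
  have hp : ((c - 1 + j, false) : ℕ × Bool) = (j + c - 1, false) := by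
    congr 1
    omega
  have hq : ((c + j, false) : ℕ × Bool) = (j + c, false) := by rw [add_comm]
  constructor
  · rintro ⟨-, hcπ, H⟩
    refine ⟨hc, by simp; omega, fun x y hx hy => ?_⟩
    simpa only [rel_drop, hp, hq] using H _ _ (by dsimp; omega) (by dsimp; omega)
  · rintro ⟨-, hcπ, H⟩
    simp only [rel_drop, hp, hq] at H
    refine ⟨by omega, by simp at hcπ; omega, fun x y hx hy => ?_⟩
    obtain ⟨y, rfl⟩ := exists_eq_add_fst (j := j) (by omega : j ≤ y.1)
    rcases lt_or_ge x.1 j with hxj | hxj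
    · have hq' := H (0, false) y (by dsimp; omega) (by dsimp at hy; omega)
      rw [zero_add] at hq'
      rw [h.rel_iff x _ hxj (by dsimp; omega), h.rel_iff x (j + c - 1, false) hxj (by dsimp; omega),
        hq', and_assoc]
    · obtain ⟨x, rfl⟩ := exists_eq_add_fst hxj
      exact H x y (by dsimp at hx; omega) (by dsimp at hy; omega)

theorem splitsAt_bullet_add_iff (hc : 0 < c) :
    (σ.bullet θ).SplitsAt (σ.1 + c) ↔ θ.SplitsAt c := by
  rcases eq_or_ne σ.1 0 with hσ | hσ
  · rw [bullet_eq_right hσ, hσ, zero_add]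
  rcases eq_or_ne θ.1 0 with hθ | hθ
  · rw [bullet_eq_left hθ]
    exact iff_of_false (fun h => absurd h.lt (by omega)) (fun h => absurd h.lt (by omega))
  rw [(splitsAt_bullet hσ hθ).splitsAt_add_iff hc, drop_bullet]

theorem BulletIrr.not_splitsAt (h : π.BulletIrr) : ¬ π.SplitsAt c := fun hs =>
  h.2 ⟨π.take c, π.drop c, by simp [hs.pos.ne', hs.lt.le], Nat.sub_ne_zero_of_lt hs.lt,
    hs.eq_bullet_take_drop⟩

theorem bulletIrr_of_forall_not_splitsAt (h₀ : π.1 ≠ 0) (h : ∀ c, ¬ π.SplitsAt c) :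
    π.BulletIrr :=
  ⟨h₀, fun ⟨σ, _, hσ, hθ, e⟩ => h σ.1 (e ▸ splitsAt_bullet hσ hθ)⟩

theorem BulletIrr.not_splitsAt_bullet (h : θ.BulletIrr) (hc : σ.1 < c) :
    ¬ (σ.bullet θ).SplitsAt c := by
  obtain ⟨c, rfl⟩ := Nat.exists_eq_add_of_lt hc
  rw [add_assoc, splitsAt_bullet_add_iff (by omega)]
  exact h.not_splitsAt

theorem bullet_inj_of_bulletIrr {σ₁ σ₂ θ₁ θ₂ : Diagram} (h₁ : θ₁.BulletIrr) (h₂ : θ₂.BulletIrr)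
    (h : σ₁.bullet θ₁ = σ₂.bullet θ₂) : σ₁ = σ₂ ∧ θ₁ = θ₂ := by
  refine bullet_inj_of_fst_eq ?_ h
  by_contra hne
  wlog hlt : σ₁.1 < σ₂.1 generalizing σ₁ σ₂ θ₁ θ₂
  · exact this h₂ h₁ h.symm (Ne.symm hne) (by omega)
  exact h₁.not_splitsAt_bullet hlt (h ▸ splitsAt_bullet (by omega) h₂.1)

theorem listBullet_eq_foldl (l : List Diagram) : listBullet l = l.foldl bullet ⟨0, ⊥⟩ := by
  cases l with
  | nil => rfl
  | cons d l => rw [List.foldl_cons, bullet_eq_right rfl]; rfl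

theorem listBullet_append_singleton (l : List Diagram) (θ : Diagram) :
    listBullet (l ++ [θ]) = (listBullet l).bullet θ := by
  simp [listBullet_eq_foldl]

theorem eq_nil_of_fst_listBullet_eq_zero {l : List Diagram} (hl : ∀ d ∈ l, d.1 ≠ 0)
    (h : (listBullet l).1 = 0) : l = [] := by
  rcases l.eq_nil_or_concat' with rfl | ⟨r, θ, rfl⟩
  · rfl
  · rw [listBullet_append_singleton, bullet_fst] at h
    exact absurd (by omega) (hl θ (by simp))

theorem listBullet_inj_of_bulletIrr {l₁ l₂ : List Diagram} (h₁ : ∀ d ∈ l₁, d.BulletIrr)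
    (h₂ : ∀ d ∈ l₂, d.BulletIrr) (h : listBullet l₁ = listBullet l₂) : l₁ = l₂ := by
  induction l₁ using List.reverseRecOn generalizing l₂ with
  | nil =>
    exact (eq_nil_of_fst_listBullet_eq_zero (fun d hd => (h₂ d hd).1) (h ▸ rfl)).symm
  | append_singleton r₁ θ₁ ih =>
    rcases l₂.eq_nil_or_concat' with rfl | ⟨r₂, θ₂, rfl⟩
    · exact eq_nil_of_fst_listBullet_eq_zero (fun d hd => (h₁ d hd).1) (h ▸ rfl)
    rw [listBullet_append_singleton, listBullet_append_singleton] at h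
    obtain ⟨hr, rfl⟩ := bullet_inj_of_bulletIrr (h₁ θ₁ (by simp)) (h₂ θ₂ (by simp)) h
    rw [ih (fun d hd => h₁ d (by simp [hd])) (fun d hd => h₂ d (by simp [hd])) hr]

theorem exists_bulletIrr_factorization (π : Diagram) :
    ∃ l : List Diagram, (∀ d ∈ l, d.BulletIrr) ∧ listBullet l = π := by
  induction hk : π.1 using Nat.strong_induction_on generalizing π with
  | _ k ih =>
  by_cases hs : ∃ c, π.SplitsAt c
  · classical
    obtain ⟨c₀, hc₀⟩ := hs
    set c := Nat.findGreatest π.SplitsAt π.1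
    have hc : π.SplitsAt c := Nat.findGreatest_spec hc₀.lt.le hc₀
    have hdrop : (π.drop c).BulletIrr := by
      refine bulletIrr_of_forall_not_splitsAt (Nat.sub_ne_zero_of_lt hc.lt) fun c' hs' => ?_
      have hlater := (hc.splitsAt_add_iff hs'.pos).2 hs'
      exact Nat.findGreatest_is_greatest (Nat.lt_add_of_pos_right hs'.pos) hlater.lt.le hlater
    obtain ⟨l, hl, hlπ⟩ := ih c (hk ▸ hc.lt) (π.take c) (by simp [hc.lt.le])
    refine ⟨l ++ [π.drop c], ?_, ?_⟩
    · simpa [or_imp, forall_and] using ⟨hl, hdrop⟩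
    · rw [listBullet_append_singleton, hlπ, ← hc.eq_bullet_take_drop]
  · push Not at hs
    rcases eq_or_ne π.1 0 with h₀ | h₀
    · exact ⟨[], by simp, eq_of_fst_eq_zero rfl h₀⟩
    · exact ⟨[π], by simpa using bulletIrr_of_forall_not_splitsAt h₀ hs, rfl⟩

end Diagram

theorem unique_bullet_factorization_general (π : Diagram) :
    ∃! l : List Diagram, (∀ d ∈ l, d.BulletIrr) ∧ Diagram.listBullet l = π := by
  obtain ⟨l, hl, rfl⟩ := Diagram.exists_bulletIrr_factorization π
  exact ⟨l, ⟨hl, rfl⟩, fun l' h' => Diagram.listBullet_inj_of_bulletIrr h'.1 hl h'.2⟩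

/-- Every nonempty partition diagram admits a unique decomposition as a
`•`-product of nonempty `•`-irreducible partition diagrams. -/
theorem unique_bullet_factorization (π : Diagram) (hπ : π.1 ≠ 0) :
    ∃! l : List Diagram, (∀ d ∈ l, d.BulletIrr) ∧ Diagram.listBullet l = π :=
  unique_bullet_factorization_general π
end

section
/- For a permutation diagram π = {{1, p(1)'}, {2, p(2)'}, ..., {k, p(k)'}} associated with a permutation p of {1,...,k}, π is •-primitive: it cannot be written as ρ⁽¹⁾ • ρ⁽²⁾ for nonempty partition diagrams ρ⁽¹⁾ and ρ⁽²⁾. -/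
open Finset

/-- The permutation diagram of `p`: the partition of `{1,…,k,1',…,k'}` into the blocks
`{i, p(i)'}` for `i = 1, …, k`. -/
def permSetoid {k : ℕ} (p : Equiv.Perm (Fin k)) : DiagramOn k :=
  Relation.EqvGen.setoid (fun x y => x.2 = true ∧ y.2 = false ∧ y.1 = p x.1)

/-!
The near-concatenation `ρ₁ • ρ₂` puts two distinct bottom nodes, the last one of `ρ₁` and the
first one of `ρ₂`, into one block. In a permutation diagram no block contains two bottom nodes: the blocks are the fibres of
the map sending `i'` to `i` and the top node `i` to `p(i)`.
-/

theorem rel_joinTwo {X : Type*} (s : Setoid X) (a b : X) : joinTwo s a b a b :=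
  le_sup_right (a := s) (Relation.EqvGen.rel a b ⟨rfl, rfl⟩)

theorem permSetoid_le_ker {k : ℕ} (p : Equiv.Perm (Fin k)) :
    permSetoid p ≤ Setoid.ker fun x : Fin k × Bool => if x.2 then p x.1 else x.1 :=
  Setoid.eqvGen_le fun _ _ ⟨hx, hy, hxy⟩ => by simp [Setoid.ker_def, hx, hy, hxy]

theorem permSetoid_rel_bottom_iff {k : ℕ} (p : Equiv.Perm (Fin k)) {i i' : Fin k} :
    permSetoid p (i, false) (i', false) ↔ i = i' := by
  refine ⟨fun h => ?_, fun h => h ▸ (permSetoid p).refl _⟩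
  simpa [Setoid.ker_def] using permSetoid_le_ker p h

def Diagram.BottomSeparated (d : Diagram) : Prop :=
  ∀ i i' : Fin d.1, d.2 (i, false) (i', false) → i = i'

theorem bottomSeparated_permSetoid {k : ℕ} (p : Equiv.Perm (Fin k)) :
    Diagram.BottomSeparated ⟨k, permSetoid p⟩ :=
  fun _ _ => (permSetoid_rel_bottom_iff p).mp

theorem Diagram.not_bottomSeparated_bullet {ρ₁ ρ₂ : Diagram} (h₁ : ρ₁.1 ≠ 0) (h₂ : ρ₂.1 ≠ 0) :
    ¬ (ρ₁.bullet ρ₂).BottomSeparated := by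
  obtain ⟨j, s⟩ := ρ₁
  obtain ⟨m, t⟩ := ρ₂
  dsimp only at h₁ h₂
  rw [Diagram.bullet, dif_neg h₁, dif_neg h₂]
  intro h
  have := h _ _ (rel_joinTwo _ _ _)
  simp only [Fin.ext_iff] at this
  omega

/-- Every permutation diagram is `•`-primitive. -/
theorem permDiagram_bullet_primitive (k : ℕ) (p : Equiv.Perm (Fin k)) :
    ¬ ∃ ρ₁ ρ₂ : Diagram, ρ₁.1 ≠ 0 ∧ ρ₂.1 ≠ 0 ∧
      (⟨k, permSetoid p⟩ : Diagram) = ρ₁.bullet ρ₂ := by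
  rintro ⟨ρ₁, ρ₂, h₁, h₂, h⟩
  exact Diagram.not_bottomSeparated_bullet h₁ h₂ (h ▸ bottomSeparated_permSetoid p)
end
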